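/- arXiv:math/0611102 — 4 statements merged into one kernel-verified Lean document; each statement's English description precedes it below -/
import Mathlib

section
/- For any σ ∈ S_{n+1} not lying in S_n, the double coset S_n σ S_n equals S_n τ_{1,n+1} S_n. -/
/-- `S_n` embedded in `S_{n+1}` as the stabilizer of the last point `n+1`. -/
def Sn (n : ℕ) : Subgroup (Equiv.Perm (Fin (n + 1))) :=
  MulAction.stabilizer (Equiv.Perm (Fin (n + 1))) (Fin.last n)

/-- The double coset `Sₙ σ Sₙ` in `S_{n+1}`. -/
def doset (n : ℕ) (σ : Equiv.Perm (Fin (n + 1))) : Set (Equiv.Perm (Fin (n + 1))) :=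
  {x | ∃ h ∈ Sn n, ∃ h' ∈ Sn n, x = h * σ * h'}

/-- For any `σ ∈ S_{n+1}` not in `Sₙ`, the double coset `Sₙ σ Sₙ` equals
`Sₙ τ_{1,n+1} Sₙ`. -/
theorem stmt7 (n : ℕ) (σ : Equiv.Perm (Fin (n + 1))) (hσ : σ ∉ Sn n) :
    doset n σ = doset n (Equiv.swap 0 (Fin.last n)) := by
  simp only [Sn, MulAction.mem_stabilizer_iff, Equiv.Perm.smul_def] at hσ
  rcases Nat.eq_zero_or_pos n with rfl | hn
  · exact absurd ((Fin.eq_zero _).trans (Fin.eq_zero _).symm) hσ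
  set τ : Equiv.Perm (Fin (n + 1)) := Equiv.swap 0 (Fin.last n) with hτ
  set a : Fin (n + 1) := σ⁻¹ (Fin.last n) with haa
  have hσa : σ a = Fin.last n := Equiv.apply_symm_apply σ _
  have ha : a ≠ Fin.last n := by
    intro h
    exact hσ ((by rw [h] : σ (Fin.last n) = σ a).trans hσa)
  have h0 : (0 : Fin (n + 1)) ≠ Fin.last n := by
    intro h
    have : (0 : ℕ) = n := by simpa using congrArg Fin.val h
    omega
  set k : Equiv.Perm (Fin (n + 1)) := Equiv.swap a 0 with hk
  set g : Equiv.Perm (Fin (n + 1)) := σ * k * τ with hg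
  have hkmem : k ∈ Sn n := by
    simp only [Sn, MulAction.mem_stabilizer_iff, Equiv.Perm.smul_def]
    exact Equiv.swap_apply_of_ne_of_ne (Ne.symm ha) (Ne.symm h0)
  have hgmem : g ∈ Sn n := by
    simp only [Sn, MulAction.mem_stabilizer_iff, Equiv.Perm.smul_def, hg,
      Equiv.Perm.mul_apply, hτ, Equiv.swap_apply_right, hk, Equiv.swap_apply_right, hσa]
  have hfact : σ = g * τ * k := by
    rw [hg]
    simp [hk, hτ, mul_assoc, Equiv.swap_mul_self_mul, Equiv.swap_mul_self]
  ext x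
  constructor
  · rintro ⟨u, hu, v, hv, rfl⟩
    exact ⟨u * g, mul_mem hu hgmem, k * v, mul_mem hkmem hv, by rw [hfact]; group⟩
  · rintro ⟨u, hu, v, hv, rfl⟩
    refine ⟨u * g⁻¹, mul_mem hu (inv_mem hgmem), k⁻¹ * v,
      mul_mem (inv_mem hkmem) hv, ?_⟩
    rw [hfact]; group
end

section
/- The convolution algebra of S_n-biinvariant functions on S_{n+1} is commutative; that is, (S_{n+1}, S_n) is a Gelfand pair. -/
open scoped Classical

/-- Convolution on `S_{n+1}` with respect to the normalized Haar (uniform probability)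
measure: `(f*g)(x) = (1/(n+1)!) Σ_y f(y) g(y⁻¹x)`. -/
noncomputable def conv (n : ℕ) (f g : Equiv.Perm (Fin (n + 1)) → ℂ) :
    Equiv.Perm (Fin (n + 1)) → ℂ :=
  fun x => (Nat.factorial (n + 1) : ℂ)⁻¹ * ∑ y : Equiv.Perm (Fin (n + 1)), f y * g (y⁻¹ * x)

/-- Every element is in the same `Sn`-double coset as its inverse. -/
lemma key (n : ℕ) (σ : Equiv.Perm (Fin (n + 1))) :
    ∃ h h' : Equiv.Perm (Fin (n + 1)), h ∈ Sn n ∧ h' ∈ Sn n ∧ h * σ * h' = σ⁻¹ := by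
  set L := Fin.last n
  set h : Equiv.Perm (Fin (n + 1)) := Equiv.swap (σ L) (σ⁻¹ L) with hh
  have hb : σ⁻¹ L = L ↔ σ L = L := by
    constructor
    · intro hbL; conv_lhs => rw [← hbL]
      simp
    · intro haL; conv_lhs => rw [← haL]
      simp
  have hmem : h ∈ Sn n := by
    rw [Sn, MulAction.mem_stabilizer_iff]
    show h L = L
    by_cases ha : σ L = L
    · simp [hh, ha, hb.mpr ha]
    · exact Equiv.swap_apply_of_ne_of_ne (fun hc => ha hc.symm) (fun hc => ha (hb.mp hc.symm))
  refine ⟨h, σ⁻¹ * h * σ⁻¹, hmem, ?_, ?_⟩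
  · rw [Sn, MulAction.mem_stabilizer_iff]
    show σ⁻¹ (h (σ⁻¹ L)) = L
    rw [hh, Equiv.swap_apply_right]
    simp
  · have hsq : h * h = 1 := by rw [hh]; exact Equiv.swap_mul_self _ _
    calc h * σ * (σ⁻¹ * h * σ⁻¹) = (h * h) * σ⁻¹ := by group
    _ = σ⁻¹ := by rw [hsq, one_mul]

/-- The convolution algebra of `Sₙ`-biinvariant functions on `S_{n+1}` is commutative:
`(S_{n+1}, Sₙ)` is a Gelfand pair. -/
theorem stmt9 (n : ℕ) (f g : Equiv.Perm (Fin (n + 1)) → ℂ)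
    (hf : ∀ h h' : Equiv.Perm (Fin (n + 1)), h ∈ Sn n → h' ∈ Sn n →
      ∀ σ, f (h * σ * h') = f σ)
    (hg : ∀ h h' : Equiv.Perm (Fin (n + 1)), h ∈ Sn n → h' ∈ Sn n →
      ∀ σ, g (h * σ * h') = g σ) :
    conv n f g = conv n g f := by
  have inv_f : ∀ σ, f σ⁻¹ = f σ := fun σ => by
    obtain ⟨h, h', hm, hm', he⟩ := key n σ
    rw [← he, hf h h' hm hm']
  have inv_g : ∀ σ, g σ⁻¹ = g σ := fun σ => by
    obtain ⟨h, h', hm, hm', he⟩ := key n σ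
    rw [← he, hg h h' hm hm']
  have biinv : ∀ h h' : Equiv.Perm (Fin (n + 1)), h ∈ Sn n → h' ∈ Sn n →
      ∀ x, conv n f g (h * x * h') = conv n f g x := by
    intro h h' hm hm' x
    unfold conv
    congr 1
    apply Fintype.sum_equiv (Equiv.mulLeft h⁻¹)
    intro y
    show f y * g (y⁻¹ * (h * x * h')) = f (h⁻¹ * y) * g ((h⁻¹ * y)⁻¹ * x)
    have e1 : f (h⁻¹ * y) = f y := by
      have := hf h⁻¹ 1 (inv_mem hm) (one_mem _) y; simpa using this
    have e2 : g (y⁻¹ * (h * x * h')) = g ((h⁻¹ * y)⁻¹ * x) := by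
      have h3 : y⁻¹ * (h * x * h') = 1 * ((h⁻¹ * y)⁻¹ * x) * h' := by group
      rw [h3, hg 1 h' (one_mem _) hm']
    rw [e1, e2]
  funext x
  obtain ⟨h, h', hm, hm', he⟩ := key n x⁻¹
  rw [inv_inv] at he
  have hx : conv n f g x = conv n f g x⁻¹ := by
    conv_lhs => rw [← he]
    exact biinv h h' hm hm' x⁻¹
  rw [hx]
  unfold conv
  congr 1
  apply Fintype.sum_equiv (Equiv.mulLeft x)
  intro z
  show f z * g (z⁻¹ * x⁻¹) = g (x * z) * f ((x * z)⁻¹ * x)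
  have e1 : f ((x * z)⁻¹ * x) = f z := by
    have h3 : (x * z)⁻¹ * x = z⁻¹ := by group
    rw [h3, inv_f]
  have e2 : g (z⁻¹ * x⁻¹) = g (x * z) := by
    rw [← inv_g (x * z), mul_inv_rev]
  rw [e1, e2, mul_comm]
end

section
/- Let χ₁ be the indicator function of the double coset S_n τ_{1,n+1} S_n in S_{n+1} and let χ₀ be the indicator of S_n. Then, with convolution by the normalized Haar measure, χ₁ * χ₁ = ((n-1)/(n+1)) χ₁ + (n/(n+1)) χ₀. -/
/-!
For every `σ ∉ Sₙ` the double coset `Sₙ σ Sₙ` is the whole complement `{x | x (n+1) ≠ n+1}` of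
`Sₙ`, so `χ₁ y * χ₁ (y⁻¹ x)` is `1` exactly when `y (n+1)` avoids both `n+1` and `x (n+1)`.
Under the normalized Haar measure `y (n+1)` is uniformly distributed on the `n+1` points, so
`(χ₁ * χ₁) x` is `n/(n+1)` when `x ∈ Sₙ` and `(n-1)/(n+1)` otherwise.
-/

open scoped Classical

/-- Indicator of the double coset `Sₙ τ_{1,n+1} Sₙ`. -/
noncomputable def chi1 (n : ℕ) : Equiv.Perm (Fin (n + 1)) → ℂ :=
  fun x => if x ∈ doset n (Equiv.swap 0 (Fin.last n)) then 1 else 0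

/-- Indicator of the subgroup `Sₙ`. -/
noncomputable def chi0 (n : ℕ) : Equiv.Perm (Fin (n + 1)) → ℂ :=
  fun x => if x ∈ Sn n then 1 else 0

open Finset Equiv Nat

lemma card_smul_sum_perm_apply {α M : Type*} [Fintype α] [DecidableEq α] [AddCommMonoid M]
    (f : α → M) (a : α) :
    Fintype.card α • ∑ σ : Perm α, f (σ a) = (Fintype.card α)! • ∑ b, f b := by
  have hindep : ∀ b, ∑ σ : Perm α, f (σ b) = ∑ σ : Perm α, f (σ a) := fun b =>
    (Equiv.sum_comp (Equiv.mulRight (swap a b)) fun σ => f (σ b)).symm.trans (by simp)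
  calc Fintype.card α • ∑ σ : Perm α, f (σ a) = ∑ b, ∑ σ : Perm α, f (σ b) := by
        simp [hindep]
    _ = ∑ σ : Perm α, ∑ b, f (σ b) := Finset.sum_comm
    _ = ∑ σ : Perm α, ∑ b, f b := by simp only [Equiv.sum_comp]
    _ = (Fintype.card α)! • ∑ b, f b := by rw [sum_const, Finset.card_univ, Fintype.card_perm]

lemma inv_factorial_mul_sum_perm_apply {α K : Type*} [Fintype α] [DecidableEq α] [Field K]
    [CharZero K] (f : α → K) (a : α) :
    ((Fintype.card α)! : K)⁻¹ * ∑ σ : Perm α, f (σ a) = (Fintype.card α : K)⁻¹ * ∑ b, f b := by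
  have : Nonempty α := ⟨a⟩
  have hcard : (Fintype.card α : K) ≠ 0 := Nat.cast_ne_zero.mpr Fintype.card_ne_zero
  have hfact : ((Fintype.card α)! : K) ≠ 0 := Nat.cast_ne_zero.mpr (factorial_ne_zero _)
  have key := card_smul_sum_perm_apply f a
  simp only [nsmul_eq_mul] at key
  field_simp
  linear_combination key

lemma mem_Sn_iff {n : ℕ} {x : Perm (Fin (n + 1))} :
    x ∈ Sn n ↔ x (Fin.last n) = Fin.last n := Iff.rfl

lemma doset_eq_of_notMem_Sn {n : ℕ} {σ : Perm (Fin (n + 1))} (hσ : σ ∉ Sn n) :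
    doset n σ = {x | x (Fin.last n) ≠ Fin.last n} := by
  rw [mem_Sn_iff] at hσ
  ext x
  constructor
  · rintro ⟨h, hh, h', hh', rfl⟩
    rw [mem_Sn_iff] at hh hh'
    simp only [Set.mem_ofPred_eq, Perm.mul_apply, hh']
    exact fun hc => hσ (h.injective (hc.trans hh.symm))
  · intro hx
    have hswap : swap (σ (Fin.last n)) (x (Fin.last n)) ∈ Sn n :=
      swap_apply_of_ne_of_ne (Ne.symm hσ) (Ne.symm hx)
    refine ⟨_, hswap, σ⁻¹ * (swap (σ (Fin.last n)) (x (Fin.last n)))⁻¹ * x, ?_, by group⟩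
    simp [mem_Sn_iff, swap_inv]

lemma chi1_apply {n : ℕ} (hn : 1 ≤ n) (x : Perm (Fin (n + 1))) :
    chi1 n x = if x (Fin.last n) ≠ Fin.last n then 1 else 0 := by
  have hswap : swap 0 (Fin.last n) ∉ Sn n := by
    simpa [mem_Sn_iff, Fin.ext_iff] using (by omega : 0 ≠ n)
  simp only [chi1, doset_eq_of_notMem_Sn hswap, Set.mem_ofPred_eq]

/-- `χ₁ * χ₁ = ((n-1)/(n+1)) χ₁ + (n/(n+1)) χ₀`. -/
theorem stmt13 (n : ℕ) (hn : 1 ≤ n) :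
    conv n (chi1 n) (chi1 n) =
      fun x => ((n : ℂ) - 1) / ((n : ℂ) + 1) * chi1 n x + (n : ℂ) / ((n : ℂ) + 1) * chi0 n x := by
  funext x
  set s : Finset (Fin (n + 1)) := {Fin.last n, x (Fin.last n)}ᶜ
  have hprod : ∀ y : Perm (Fin (n + 1)),
      chi1 n y * chi1 n (y⁻¹ * x) = if y (Fin.last n) ∈ s then 1 else 0 := by
    intro y
    simp only [s, chi1_apply hn, Perm.mul_apply, ne_eq, Perm.inv_eq_iff_eq, mem_compl, mem_insert,
      mem_singleton, not_or]
    by_cases h₁ : y (Fin.last n) = Fin.last n <;> by_cases h₂ : x (Fin.last n) = y (Fin.last n) <;>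
      simp [h₁, h₂, eq_comm]
  have hconv : conv n (chi1 n) (chi1 n) x = ((n : ℂ) + 1)⁻¹ * #s := by
    simpa [conv, hprod] using
      inv_factorial_mul_sum_perm_apply (K := ℂ) (fun b => if b ∈ s then 1 else 0) (Fin.last n)
  rw [hconv, chi1_apply hn, chi0, mem_Sn_iff]
  by_cases hx : x (Fin.last n) = Fin.last n
  · have : #s = n := by simp [s, hx, card_compl]
    simp [hx, this]
    field_simp
  · have : #s = n - 1 := by
      rw [card_compl, card_pair (Ne.symm hx), Fintype.card_fin]; omega
    simp [hx, this, Nat.cast_sub hn]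
    field_simp
end

section
/- The spherical functions of the Gelfand pair (S_{n+1}, S_n) — i.e., the S_n-biinvariant functions φ with φ(e)=1 satisfying φ(σ)φ(ζ) = (1/n!) Σ_{τ ∈ S_n} φ(σ τ ζ) for all σ, ζ ∈ S_{n+1} — are exactly the constant function 1 and the function φ_n taking value 1 on S_n and −1/n on S_{n+1} \ S_n. -/
open scoped Classical

/-- Fibers of `g ↦ g • a` times the orbit size equal the group size. -/
lemma card_fiber_mul_card_orbit {G X : Type*} [Group G] [Fintype G] [MulAction G X]
    (a b : X) (g₀ : G) (hg₀ : g₀ • a = b) [Fintype (MulAction.orbit G a)]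
    [Fintype {g : G // g • a = b}] :
    Fintype.card {g : G // g • a = b} * Fintype.card (MulAction.orbit G a) =
      Fintype.card G := by
  have e1 : {g : G // g • a = b} ≃ {g : G // g • a = a} :=
    (Equiv.mulLeft g₀⁻¹).subtypeEquiv (by
      intro g
      simp only [Equiv.coe_mulLeft, mul_smul]
      constructor
      · rintro rfl; rw [← hg₀, inv_smul_smul]
      · intro h
        have := congrArg (g₀ • ·) h
        simpa [smul_smul, hg₀] using this)
  have e2 : {g : G // g • a = a} ≃ MulAction.stabilizer G a :=
    Equiv.subtypeEquivRight fun g => (MulAction.mem_stabilizer_iff).symm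
  rw [Fintype.card_congr (e1.trans e2), mul_comm]
  exact MulAction.card_orbit_mul_card_stabilizer_eq_card_group G a


lemma mem_Sn {n : ℕ} {σ : Equiv.Perm (Fin (n + 1))} :
    σ ∈ Sn n ↔ σ (Fin.last n) = Fin.last n := Iff.rfl

/-- `|Sₙ| = n!`. -/
lemma card_Sn (n : ℕ) : Fintype.card (Sn n) = n.factorial := by
  have horb : MulAction.orbit (Equiv.Perm (Fin (n + 1))) (Fin.last n) = Set.univ := by
    ext x
    simp only [Set.mem_univ, iff_true, MulAction.mem_orbit_iff]
    exact ⟨Equiv.swap (Fin.last n) x, by simp [Equiv.Perm.smul_def]⟩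
  have h := card_fiber_mul_card_orbit (G := Equiv.Perm (Fin (n + 1)))
    (Fin.last n) (Fin.last n) 1 (one_smul _ _)
  rw [Fintype.card_perm, Fintype.card_fin] at h
  have horbcard : Fintype.card (MulAction.orbit (Equiv.Perm (Fin (n + 1))) (Fin.last n))
      = n + 1 := by
    exact (Fintype.card_congr ((Equiv.setCongr horb).trans (Equiv.Set.univ _))).trans
      (Fintype.card_fin _)
  rw [horbcard] at h
  have hcard : Fintype.card (Sn n) = Fintype.card
      {g : Equiv.Perm (Fin (n + 1)) // g • Fin.last n = Fin.last n} :=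
    Fintype.card_congr (Equiv.subtypeEquivRight fun g => Iff.rfl)
  rw [hcard]
  refine Nat.eq_of_mul_eq_mul_right (by omega : 0 < n + 1) ?_
  rw [h, Nat.factorial_succ, mul_comm]

/-- The number of elements of `Sₙ` sending `a` to `b` (both off the last point) is `(n-1)!`. -/
lemma card_fiber_Sn (n : ℕ) (hn : 1 ≤ n) (a b : Fin (n + 1))
    (ha : a ≠ Fin.last n) (hb : b ≠ Fin.last n) :
    Fintype.card {τ : Sn n // (τ : Equiv.Perm (Fin (n + 1))) a = b} = (n - 1).factorial := by
  have hsw : Equiv.swap a b ∈ Sn n := by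
    rw [mem_Sn]
    exact Equiv.swap_apply_of_ne_of_ne (Ne.symm ha) (Ne.symm hb)
  set g₀ : Sn n := ⟨Equiv.swap a b, hsw⟩ with hg₀def
  have hg₀ : g₀ • a = b := Equiv.swap_apply_left a b
  have horb : MulAction.orbit (Sn n) a = {x | x ≠ Fin.last n} := by
    ext x
    simp only [MulAction.mem_orbit_iff, Set.mem_setOf_eq]
    constructor
    · rintro ⟨τ, rfl⟩ hx
      have : (τ : Equiv.Perm (Fin (n + 1))) a = Fin.last n := hx
      have h2 : (τ : Equiv.Perm (Fin (n + 1))) (Fin.last n) = Fin.last n := τ.2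
      exact ha ((τ : Equiv.Perm (Fin (n + 1))).injective (this.trans h2.symm))
    · intro hx
      refine ⟨⟨Equiv.swap a x, ?_⟩, Equiv.swap_apply_left a x⟩
      rw [mem_Sn]
      exact Equiv.swap_apply_of_ne_of_ne (Ne.symm ha) (Ne.symm hx)
  have horbcard : Fintype.card (MulAction.orbit (Sn n) a) = n := by
    have : Fintype.card {x : Fin (n + 1) // x ≠ Fin.last n} = n := by
      simp [Fintype.card_subtype_compl]
    exact (Fintype.card_congr ((Equiv.setCongr horb).trans
      (Equiv.subtypeEquivRight fun x => Iff.rfl))).trans this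
  have h := card_fiber_mul_card_orbit (G := Sn n) a b g₀ hg₀
  rw [horbcard, card_Sn] at h
  have hfac : n.factorial = (n - 1).factorial * n := by
    have h1 : n - 1 + 1 = n := by omega
    calc n.factorial = (n - 1 + 1).factorial := by rw [h1]
    _ = (n - 1 + 1) * (n - 1).factorial := Nat.factorial_succ _
    _ = (n - 1).factorial * n := by rw [h1, mul_comm]
  rw [hfac] at h
  have hcongr : Fintype.card {τ : Sn n // (τ : Equiv.Perm (Fin (n + 1))) a = b}
      = Fintype.card {g : Sn n // g • a = b} := Fintype.card_congr
    (Equiv.subtypeEquivRight fun g => Iff.rfl)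
  rw [hcongr]
  exact Nat.eq_of_mul_eq_mul_right (by omega) h

/-- Key sum computation for `σ, ζ ∉ Sₙ`. -/
lemma sum_ite_Sn (n : ℕ) (hn : 1 ≤ n) (σ ζ : Equiv.Perm (Fin (n + 1)))
    (hσ : σ ∉ Sn n) (hζ : ζ ∉ Sn n) (c : ℂ) :
    ∑ τ : Sn n, (if σ * (τ : Equiv.Perm (Fin (n + 1))) * ζ ∈ Sn n then (1 : ℂ) else c)
      = ((n - 1).factorial : ℂ) +
        ((n.factorial : ℂ) - ((n - 1).factorial : ℂ)) * c := by
  have hζl : ζ (Fin.last n) ≠ Fin.last n := fun h => hζ (mem_Sn.mpr h)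
  have hσl : σ⁻¹ (Fin.last n) ≠ Fin.last n := by
    intro h
    apply hσ
    rw [mem_Sn]
    conv_lhs => rw [← h]
    simp
  have hcond : ∀ τ : Sn n, (σ * (τ : Equiv.Perm (Fin (n + 1))) * ζ ∈ Sn n ↔
      (τ : Equiv.Perm (Fin (n + 1))) (ζ (Fin.last n)) = σ⁻¹ (Fin.last n)) := by
    intro τ
    rw [mem_Sn]
    simp only [Equiv.Perm.mul_apply]
    constructor
    · intro h; have := congrArg (fun x => σ⁻¹ x) h; simpa using this
    · intro h; have := congrArg (fun x => σ x) h; simpa using this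
  have hre : ∀ τ : Sn n,
      (if σ * (τ : Equiv.Perm (Fin (n + 1))) * ζ ∈ Sn n then (1 : ℂ) else c)
        = (if (τ : Equiv.Perm (Fin (n + 1))) (ζ (Fin.last n)) = σ⁻¹ (Fin.last n)
            then (1 : ℂ) else c) := by
    intro τ
    by_cases h : σ * (τ : Equiv.Perm (Fin (n + 1))) * ζ ∈ Sn n
    · rw [if_pos h, if_pos ((hcond τ).mp h)]
    · rw [if_neg h, if_neg (fun hc => h ((hcond τ).mpr hc))]
  rw [Finset.sum_congr rfl fun τ _ => hre τ, Finset.sum_ite, Finset.sum_const,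
    Finset.sum_const]
  have hcard1 : (Finset.univ.filter fun τ : Sn n =>
      (τ : Equiv.Perm (Fin (n + 1))) (ζ (Fin.last n)) = σ⁻¹ (Fin.last n)).card
      = (n - 1).factorial := by
    rw [← Fintype.card_subtype]
    exact card_fiber_Sn n hn _ _ hζl hσl
  have hcard2 : (Finset.univ.filter fun τ : Sn n =>
      ¬ (τ : Equiv.Perm (Fin (n + 1))) (ζ (Fin.last n)) = σ⁻¹ (Fin.last n)).card
      = n.factorial - (n - 1).factorial := by
    have := Finset.card_filter_add_card_filter_not (s := (Finset.univ : Finset (Sn n)))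
      (p := fun τ : Sn n => (τ : Equiv.Perm (Fin (n + 1))) (ζ (Fin.last n)) = σ⁻¹ (Fin.last n))
    rw [Finset.card_univ, card_Sn, hcard1] at this
    omega
  rw [hcard1, hcard2, nsmul_eq_mul, nsmul_eq_mul, mul_one,
    Nat.cast_sub (Nat.factorial_le (by omega))]

/-- The spherical functions of the Gelfand pair `(S_{n+1}, Sₙ)` — the `Sₙ`-biinvariant
functions `φ` with `φ(e) = 1` satisfying
`φ(σ)φ(ζ) = (1/n!) Σ_{τ∈Sₙ} φ(σ τ ζ)` — are exactly the constant function `1` and the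
function equal to `1` on `Sₙ` and `-1/n` off `Sₙ`. -/
theorem stmt14 (n : ℕ) (hn : 1 ≤ n) (φ : Equiv.Perm (Fin (n + 1)) → ℂ) :
    ((∀ h h' : Equiv.Perm (Fin (n + 1)), h ∈ Sn n → h' ∈ Sn n →
        ∀ σ, φ (h * σ * h') = φ σ) ∧ φ 1 = 1 ∧
      (∀ σ ζ : Equiv.Perm (Fin (n + 1)),
        φ σ * φ ζ = (Nat.factorial n : ℂ)⁻¹ *
          ∑ τ : Sn n, φ (σ * (τ : Equiv.Perm (Fin (n + 1))) * ζ))) ↔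
    ((φ = fun _ => 1) ∨ (φ = fun σ => if σ ∈ Sn n then 1 else -1 / (n : ℂ))) := by
  have hn0 : (n : ℂ) ≠ 0 := Nat.cast_ne_zero.mpr (by omega)
  have hfac0 : (n.factorial : ℂ) ≠ 0 := Nat.cast_ne_zero.mpr n.factorial_ne_zero
  have hF0 : ((n - 1).factorial : ℂ) ≠ 0 := Nat.cast_ne_zero.mpr (n - 1).factorial_ne_zero
  have hfacC : (n.factorial : ℂ) = (n : ℂ) * ((n - 1).factorial : ℂ) := by
    have h1 : n - 1 + 1 = n := by omega
    have : n.factorial = n * (n - 1).factorial := by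
      conv_lhs => rw [← h1, Nat.factorial_succ, h1]
    rw [this]; push_cast; ring
  have hlast0 : (0 : Fin (n + 1)) ≠ Fin.last n := by
    intro h
    have := congrArg Fin.val h
    simp only [Fin.val_zero, Fin.val_last] at this
    omega
  constructor
  · rintro ⟨hbi, h1, hfe⟩
    have hK : ∀ h ∈ Sn n, φ h = 1 := by
      intro h hh
      have := hbi h 1 hh (one_mem _) 1
      simpa [h1] using this
    set t := Equiv.swap (0 : Fin (n + 1)) (Fin.last n) with ht
    have htK : t ∉ Sn n := by
      intro h
      rw [mem_Sn, Equiv.swap_apply_right] at h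
      exact hlast0 h
    have hoff : ∀ σ, σ ∉ Sn n → φ σ = φ t := by
      intro σ hσ
      have hσl : σ (Fin.last n) ≠ Fin.last n := fun h => hσ (mem_Sn.mpr h)
      set h₁ := Equiv.swap (0 : Fin (n + 1)) (σ (Fin.last n)) with hh₁def
      have hh₁ : h₁ ∈ Sn n :=
        mem_Sn.mpr (Equiv.swap_apply_of_ne_of_ne (Ne.symm hlast0) (Ne.symm hσl))
      set h₂ := t⁻¹ * (h₁⁻¹ * σ) with hh₂def
      have hh₂ : h₂ ∈ Sn n := by
        rw [mem_Sn, hh₂def, ht, hh₁def]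
        simp only [Equiv.Perm.mul_apply, Equiv.swap_inv]
        rw [Equiv.swap_apply_right, Equiv.swap_apply_left]
      have heq := hbi h₁ h₂ hh₁ hh₂ t
      have hcomp : h₁ * t * h₂ = σ := by rw [hh₂def]; group
      rw [hcomp] at heq
      exact heq
    set c := φ t with hc
    have hft := hfe t t
    have hterm : ∀ τ : Sn n, φ (t * (τ : Equiv.Perm (Fin (n + 1))) * t)
        = if t * (τ : Equiv.Perm (Fin (n + 1))) * t ∈ Sn n then (1 : ℂ) else c := by
      intro τ
      by_cases h : t * (τ : Equiv.Perm (Fin (n + 1))) * t ∈ Sn n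
      · rw [if_pos h]; exact hK _ h
      · rw [if_neg h]; exact hoff _ h
    rw [Finset.sum_congr rfl fun τ _ => hterm τ,
      sum_ite_Sn n hn t t htK htK c] at hft
    have hkey : (c - 1) * ((n : ℂ) * c + 1) = 0 := by
      have h2 : (n.factorial : ℂ) * (c * c)
          = ((n - 1).factorial : ℂ) + ((n.factorial : ℂ) - ((n - 1).factorial : ℂ)) * c := by
        rw [hft, ← mul_assoc, mul_inv_cancel₀ hfac0, one_mul]
      rw [hfacC] at h2
      have h3 : ((n - 1).factorial : ℂ) * ((c - 1) * ((n : ℂ) * c + 1)) = 0 := by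
        linear_combination h2
      rcases mul_eq_zero.mp h3 with h | h
      · exact absurd h hF0
      · exact h
    rcases mul_eq_zero.mp hkey with h | h
    · left
      have hc1 : c = 1 := sub_eq_zero.mp h
      funext σ
      by_cases hσ : σ ∈ Sn n
      · exact hK σ hσ
      · rw [hoff σ hσ]; exact hc1
    · right
      have hcv : c = -1 / (n : ℂ) := by
        field_simp
        linear_combination h
      funext σ
      by_cases hσ : σ ∈ Sn n
      · simp only [if_pos hσ]; exact hK σ hσ
      · simp only [if_neg hσ]; rw [hoff σ hσ]; exact hcv
  · rintro (rfl | rfl)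
    · refine ⟨fun _ _ _ _ _ => rfl, rfl, fun σ ζ => ?_⟩
      show (1 : ℂ) * 1 = (n.factorial : ℂ)⁻¹ * ∑ _τ : Sn n, (1 : ℂ)
      rw [Finset.sum_const, Finset.card_univ, card_Sn, nsmul_eq_mul]
      field_simp
    · refine ⟨?_, if_pos (one_mem _), fun σ ζ => ?_⟩
      · intro h h' hh hh' σ
        simp only [Subgroup.mul_mem_cancel_right _ hh', Subgroup.mul_mem_cancel_left _ hh]
      · by_cases hσ : σ ∈ Sn n
        · have hterm : ∀ τ : Sn n,
              (σ * (τ : Equiv.Perm (Fin (n + 1))) * ζ ∈ Sn n) ↔ (ζ ∈ Sn n) := fun τ =>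
            Subgroup.mul_mem_cancel_left _ (mul_mem hσ τ.2)
          simp only [hterm, if_pos hσ, one_mul]
          rw [Finset.sum_const, Finset.card_univ, card_Sn, nsmul_eq_mul, ← mul_assoc,
            inv_mul_cancel₀ hfac0, one_mul]
        · by_cases hζ : ζ ∈ Sn n
          · have hterm : ∀ τ : Sn n,
                (σ * (τ : Equiv.Perm (Fin (n + 1))) * ζ ∈ Sn n) ↔ (σ ∈ Sn n) := by
              intro τ
              rw [Subgroup.mul_mem_cancel_right _ hζ, Subgroup.mul_mem_cancel_right _ τ.2]
            simp only [hterm, if_pos hζ, mul_one]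
            rw [Finset.sum_const, Finset.card_univ, card_Sn, nsmul_eq_mul, ← mul_assoc,
              inv_mul_cancel₀ hfac0, one_mul]
          · simp only [if_neg hσ, if_neg hζ]
            rw [sum_ite_Sn n hn σ ζ hσ hζ (-1 / (n : ℂ)), hfacC]
            field_simp
            ring
end
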